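/- Let A ⊆ ℝ² be a finite set and let x, x₁ ∈ ℝ² be distinct points such that the closed segment [x, x₁] meets A only possibly at x (segment ℝ x x₁ ∩ A ⊆ {x}). Let m = (x + x₁)/2 be the midpoint of x and x₁. Then there exists a positive definite quadratic form Q on ℝ² such that the closed ellipsoid E = {p ∈ ℝ² | Q (p − m) ≤ 1} centered at m contains the segment [x, x₁] and satisfies E ∩ A ⊆ {x}. -/

import Mathlib

/-!
Put `h = x₁ - m`, so that the segment is `m + [-h, h]`, and pick a linear functional `φ`
with `φ h = 1`. The forms `Q_β v = φ v ² + β ‖v - φ v • h‖²` (`β > 0`) are positive definite,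
equal `s²` at `s • h`, so their unit balls around `m` contain the segment; and as `β → ∞` they
exceed `1` at every point off the segment, hence at all the finitely many points of `A \ {x}`.
-/

open Filter

section

variable {E : Type*} [NormedAddCommGroup E] [InnerProductSpace ℝ E]

noncomputable def segmentForm (φ : E →ₗ[ℝ] ℝ) (h : E) (β : ℝ) : QuadraticForm ℝ E :=
  QuadraticMap.sq.comp φ +
    β • (LinearMap.BilinMap.toQuadraticMap (innerₗ E)).comp (LinearMap.id - φ.smulRight h)

variable {φ : E →ₗ[ℝ] ℝ} {h : E} {β : ℝ}

theorem segmentForm_apply (v : E) :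
    segmentForm φ h β v = φ v ^ 2 + β * ‖v - φ v • h‖ ^ 2 := by
  rw [← real_inner_self_eq_norm_sq]
  simp only [segmentForm, add_apply, smul_apply, QuadraticMap.comp_apply,
    QuadraticMap.sq_apply, LinearMap.BilinMap.toQuadraticMap_apply, innerₗ_apply_apply,
    LinearMap.sub_apply, LinearMap.id_apply, LinearMap.smulRight_apply, smul_eq_mul, sq]

theorem segmentForm_posDef (hβ : 0 < β) : (segmentForm φ h β).PosDef := by
  intro v hv
  rw [segmentForm_apply]
  by_cases hφv : φ v = 0
  · simpa [hφv] using mul_pos hβ (pow_pos (norm_pos_iff.mpr hv) 2)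
  · exact add_pos_of_pos_of_nonneg (by positivity) (by positivity)

theorem segmentForm_smul_self (hφ : φ h = 1) (s : ℝ) : segmentForm φ h β (s • h) = s ^ 2 := by
  simp [segmentForm_apply, hφ]

theorem mem_segment_neg_self_iff {v : E} :
    v ∈ segment ℝ (-h) h ↔ ∃ s ∈ Set.Icc (-1 : ℝ) 1, s • h = v := by
  rw [segment_eq_image']
  constructor
  · rintro ⟨θ, ⟨hθ₀, hθ₁⟩, rfl⟩
    exact ⟨2 * θ - 1, ⟨by linarith, by linarith⟩, by module⟩
  · rintro ⟨s, ⟨hs₁, hs₂⟩, rfl⟩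
    exact ⟨(s + 1) / 2, ⟨by linarith, by linarith⟩, by module⟩

theorem eventually_one_lt_segmentForm {v : E} (hv : v ∉ segment ℝ (-h) h) :
    ∀ᶠ β in atTop, 1 < segmentForm φ h β v := by
  simp_rw [segmentForm_apply]
  by_cases hπ : v - φ v • h = 0
  · have hφv : 1 < φ v ^ 2 := by
      rw [sub_eq_zero] at hπ
      contrapose! hv
      rw [hπ, mem_segment_neg_self_iff]
      exact ⟨φ v, abs_le.mp ((sq_le_one_iff_abs_le_one _).mp hv), rfl⟩
    filter_upwards [eventually_ge_atTop 0] with β hβ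
    nlinarith [mul_nonneg hβ (sq_nonneg ‖v - φ v • h‖)]
  · have hpos : 0 < ‖v - φ v • h‖ ^ 2 := by positivity
    filter_upwards [eventually_gt_atTop (‖v - φ v • h‖ ^ 2)⁻¹] with β hβ
    have : 1 < β * ‖v - φ v • h‖ ^ 2 := by rwa [← inv_lt_iff_one_lt_mul₀ hpos]
    nlinarith [sq_nonneg (φ v)]

end

theorem mem_segment_iff_sub_midpoint_mem {V : Type*} [AddCommGroup V] [Module ℝ V] {x y p : V} :
    p ∈ segment ℝ x y ↔
      p - midpoint ℝ x y ∈ segment ℝ (-(y - midpoint ℝ x y)) (y - midpoint ℝ x y) := by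
  rw [neg_sub, midpoint_sub_right, ← left_sub_midpoint,
    ← mem_segment_translate ℝ (midpoint ℝ x y) (x := p - _), add_sub_cancel, add_sub_cancel,
    add_sub_cancel]

/-- Given a finite set `A` and distinct points `x, x₁` whose joining segment meets `A`
at most at `x`, there is a closed ellipsoid centered at the midpoint of `x` and `x₁`
(given by a positive definite quadratic form) containing the segment and meeting `A`
at most at `x`. -/
theorem exists_ellipsoid_centered_at_midpoint_containing_segment
    (A : Set (EuclideanSpace ℝ (Fin 2))) (hA : A.Finite)
    (x x₁ : EuclideanSpace ℝ (Fin 2)) (hne : x ≠ x₁)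
    (hseg : segment ℝ x x₁ ∩ A ⊆ {x})
    (m : EuclideanSpace ℝ (Fin 2)) (hm : m = midpoint ℝ x x₁) :
    ∃ Q : QuadraticForm ℝ (EuclideanSpace ℝ (Fin 2)), Q.PosDef ∧
      segment ℝ x x₁ ⊆ {p : EuclideanSpace ℝ (Fin 2) | Q (p - m) ≤ 1} ∧
      {p : EuclideanSpace ℝ (Fin 2) | Q (p - m) ≤ 1} ∩ A ⊆ {x} := by
  subst hm
  set h := x₁ - midpoint ℝ x x₁
  have hh : h ≠ 0 := by simpa [h, right_sub_midpoint, sub_eq_zero] using hne.symm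
  obtain ⟨φ, hφ⟩ := Module.Projective.exists_dual_eq_one ℝ hh
  have hfar : ∀ a ∈ A \ {x}, a - midpoint ℝ x x₁ ∉ segment ℝ (-h) h := fun a ⟨ha, hax⟩ hah =>
    hax (hseg ⟨mem_segment_iff_sub_midpoint_mem.2 hah, ha⟩)
  obtain ⟨β, hβ, hβA⟩ := ((eventually_gt_atTop 0).and
    (hA.sdiff.eventually_all.2 fun a ha => eventually_one_lt_segmentForm (hfar a ha))).exists
  refine ⟨segmentForm φ h β, segmentForm_posDef hβ, fun p hp => ?_, fun a ⟨haQ, ha⟩ => ?_⟩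
  · obtain ⟨s, hs, hps⟩ := mem_segment_neg_self_iff.1 (mem_segment_iff_sub_midpoint_mem.1 hp)
    rw [Set.mem_ofPred_eq, ← hps, segmentForm_smul_self hφ, sq_le_one_iff_abs_le_one]
    exact abs_le.2 hs
  · by_contra hax
    exact (hβA a ⟨ha, hax⟩).not_ge haQ
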